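/- arXiv:2601.21017 — 4 statements merged into one kernel-verified Lean document; each statement's English description precedes it below -/
import Mathlib

section
/- Let I ⊆ ℝ be an interval and let ψ : (0,∞) × I → ℝ be twice continuously differentiable in r and once in t, and set u(r,t) := r^{−2} ψ(r,t). Then at any point (r,t) ∈ (0,∞) × I, ψ satisfies ψ_t = ψ_{rr} + (1/r)ψ_r − (2/r²)(ψ−1)(ψ−2)ψ if and only if u satisfies u_t = u_{rr} + (5/r)u_r + (6 − 2r²u)u². -/
open Filter Topology

/-!
Write `f = ψ(·, t)` and `u = f / r²`. Differentiating twice,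
`u'' + (5/r) u' = (f'' + f'/r - 4 f/r²) / r²`, and `(6 - 2r²u) u² = (6 f² - 2 f³) / r⁴`;
as `4f - 6f² + 2f³ = 2 (f - 1)(f - 2) f`, the right-hand side of the `u`-equation is `r⁻²`
times that of the `ψ`-equation. As `r⁻²` does not depend on `t`, the left-hand sides differ by the same factor.
-/

theorem HasDerivAt.div_sq {f : ℝ → ℝ} {f' x : ℝ} (hf : HasDerivAt f f' x) (hx : x ≠ 0) :
    HasDerivAt (fun y => f y / y ^ 2) (f' / x ^ 2 - 2 * f x / x ^ 3) x := by
  refine (hf.div (hasDerivAt_pow 2 x) (pow_ne_zero 2 hx)).congr_deriv ?_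
  field_simp
  ring

theorem deriv_div_sq_eventuallyEq {f : ℝ → ℝ} {x : ℝ} (hf : ContDiffAt ℝ 2 f x) (hx : x ≠ 0) :
    deriv (fun y => f y / y ^ 2) =ᶠ[𝓝 x] fun y => deriv f y / y ^ 2 - 2 * f y / y ^ 3 := by
  filter_upwards [hf.eventually (by simp), eventually_ne_nhds hx] with y hfy hy
  exact ((hfy.differentiableAt (by simp)).hasDerivAt.div_sq hy).deriv

theorem deriv_deriv_div_sq {f : ℝ → ℝ} {x : ℝ} (hf : ContDiffAt ℝ 2 f x) (hx : x ≠ 0) :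
    deriv (deriv fun y => f y / y ^ 2) x
      = deriv (deriv f) x / x ^ 2 - 4 * deriv f x / x ^ 3 + 6 * f x / x ^ 4 := by
  have hf' : HasDerivAt f (deriv f x) x := (hf.differentiableAt (by simp)).hasDerivAt
  have hf'' : HasDerivAt (deriv f) (deriv (deriv f) x) x :=
    ((hf.derivWithin (m := 1) (by norm_num)).differentiableAt one_ne_zero).hasDerivAt
  rw [(deriv_div_sq_eventuallyEq hf hx).deriv_eq]
  refine ((hf''.div_sq hx).sub ((hf'.const_mul 2).div (hasDerivAt_pow 3 x)
    (pow_ne_zero 3 hx))).deriv.trans ?_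
  field_simp
  ring

theorem radial_rhs_div_sq {r : ℝ} (hr : r ≠ 0) (a b c : ℝ) :
    (c / r ^ 2 - 4 * b / r ^ 3 + 6 * a / r ^ 4) + (5 / r) * (b / r ^ 2 - 2 * a / r ^ 3)
        + (6 - 2 * r ^ 2 * (a / r ^ 2)) * (a / r ^ 2) ^ 2
      = (c + (1 / r) * b - (2 / r ^ 2) * (a - 1) * (a - 2) * a) / r ^ 2 := by
  field_simp
  ring

theorem ym_psi_u_equation_equivalence_general (I : Set ℝ)
    (ψ : ℝ → ℝ → ℝ)
    (hr2 : ∀ t ∈ I, ContDiffOn ℝ 2 (fun r' => ψ r' t) (Set.Ioi 0))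
    (r t : ℝ) (hr : 0 < r) (htI : t ∈ I) :
    (derivWithin (fun t' => ψ r t') I t
        = deriv (fun r' => deriv (fun r'' => ψ r'' t) r') r
          + (1 / r) * deriv (fun r' => ψ r' t) r
          - (2 / r ^ 2) * (ψ r t - 1) * (ψ r t - 2) * ψ r t)
      ↔
    (derivWithin (fun t' => ψ r t' / r ^ 2) I t
        = deriv (fun r' => deriv (fun r'' => ψ r'' t / r'' ^ 2) r') r
          + (5 / r) * deriv (fun r' => ψ r' t / r' ^ 2) r
          + (6 - 2 * r ^ 2 * (ψ r t / r ^ 2)) * (ψ r t / r ^ 2) ^ 2) := by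
  have hf : ContDiffAt ℝ 2 (fun r' => ψ r' t) r :=
    (hr2 t htI).contDiffAt (Ioi_mem_nhds hr)
  rw [derivWithin_div_const, deriv_deriv_div_sq hf hr.ne',
    (deriv_div_sq_eventuallyEq hf hr.ne').eq_of_nhds, radial_rhs_div_sq hr.ne',
    div_left_inj' (pow_ne_zero 2 hr.ne')]

/-- Equivalence of the equivariant Yang–Mills heat flow equation for `ψ` and the
six-dimensional radial heat equation for `u = r⁻² ψ`: at any point `(r,t)` with `r > 0`
and `t` in the time interval `I`, `ψ_t = ψ_{rr} + (1/r)ψ_r − (2/r²)(ψ−1)(ψ−2)ψ` holds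
if and only if `u_t = u_{rr} + (5/r)u_r + (6 − 2r²u)u²` holds. -/
theorem ym_psi_u_equation_equivalence (I : Set ℝ) (hI : I.OrdConnected)
    (ψ : ℝ → ℝ → ℝ)
    (hr2 : ∀ t ∈ I, ContDiffOn ℝ 2 (fun r' => ψ r' t) (Set.Ioi 0))
    (ht1 : ∀ r ∈ Set.Ioi (0:ℝ), ∀ t ∈ I, DifferentiableWithinAt ℝ (fun t' => ψ r t') I t)
    (r t : ℝ) (hr : 0 < r) (htI : t ∈ I) :
    (derivWithin (fun t' => ψ r t') I t
        = deriv (fun r' => deriv (fun r'' => ψ r'' t) r') r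
          + (1 / r) * deriv (fun r' => ψ r' t) r
          - (2 / r ^ 2) * (ψ r t - 1) * (ψ r t - 2) * ψ r t)
      ↔
    (derivWithin (fun t' => ψ r t' / r ^ 2) I t
        = deriv (fun r' => deriv (fun r'' => ψ r'' t / r'' ^ 2) r') r
          + (5 / r) * deriv (fun r' => ψ r' t / r' ^ 2) r
          + (6 - 2 * r ^ 2 * (ψ r t / r ^ 2)) * (ψ r t / r ^ 2) ^ 2) :=
  ym_psi_u_equation_equivalence_general I ψ hr2 r t hr htI
end

section
/- There exists a constant C > 0 such that for every R ≥ 2 and every μ ∈ (0,1], | ∫₀^{4R} 24 ρ⁵/(1+ρ²)⁴ e^{−μρ²} dρ − 4 | ≤ C ( R^{−2} + μ R² ). -/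
/-!
The weight `24 ρ⁵ / (1 + ρ²)⁴` has the elementary primitive `4 ρ⁶ / (1 + ρ²)³`, so its integral
over `[0, X]` falls short of `4` by `4 (1 + 3X² + 3X⁴) / (1 + X²)³ ≤ 12 / (1 + X²)`, which is
`O(R⁻²)` for `X = 4R`. Inserting the Gaussian changes the integrand by at most `μρ²` times the
weight, and `ρ²` times the weight is bounded by `24`; over `[0, 4R]` this costs at most
`96 μ R ≤ 48 μ R²`.
-/

open Real intervalIntegral

lemma abs_exp_neg_sub_one_le {y : ℝ} (hy : 0 ≤ y) : |exp (-y) - 1| ≤ y := by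
  rw [abs_sub_comm, abs_of_nonneg (sub_nonneg.2 (exp_le_one_iff.2 (neg_nonpos.2 hy)))]
  linarith [add_one_le_exp (-y)]

lemma abs_integral_mul_exp_neg_mul_sq_sub_integral_le {g : ℝ → ℝ} (hg : Continuous g)
    {M μ : ℝ} (hgM : ∀ ρ, |g ρ| * ρ ^ 2 ≤ M) (hμ : 0 ≤ μ) (a b : ℝ) :
    |(∫ ρ in a..b, g ρ * exp (-μ * ρ ^ 2)) - ∫ ρ in a..b, g ρ| ≤ μ * M * |b - a| := by
  have hge : Continuous fun ρ => g ρ * exp (-μ * ρ ^ 2) := by fun_prop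
  rw [← integral_sub (hge.intervalIntegrable a b) (hg.intervalIntegrable a b)]
  refine norm_integral_le_of_norm_le_const (f := fun ρ => g ρ * exp (-μ * ρ ^ 2) - g ρ)
    fun ρ _ => ?_
  calc ‖g ρ * exp (-μ * ρ ^ 2) - g ρ‖ = |g ρ| * |exp (-(μ * ρ ^ 2)) - 1| := by
        rw [Real.norm_eq_abs, ← abs_mul, neg_mul, mul_sub, mul_one]
    _ ≤ |g ρ| * (μ * ρ ^ 2) :=
        mul_le_mul_of_nonneg_left (abs_exp_neg_sub_one_le (by positivity)) (abs_nonneg _)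
    _ = μ * (|g ρ| * ρ ^ 2) := by ring
    _ ≤ μ * M := mul_le_mul_of_nonneg_left (hgM ρ) hμ

/-- The product `V(ρ) Z(ρ) ρ⁵` with `V = 24 / (1 + ρ²)²` and `Z = 1 / (1 + ρ²)²`. -/
noncomputable def bubbleWeight (ρ : ℝ) : ℝ := 24 * ρ ^ 5 / (1 + ρ ^ 2) ^ 4

lemma continuous_bubbleWeight : Continuous bubbleWeight := by
  unfold bubbleWeight
  fun_prop (disch := intro x; positivity)

lemma hasDerivAt_primitive_bubbleWeight (ρ : ℝ) :
    HasDerivAt (fun ρ : ℝ => 4 * ρ ^ 6 / (1 + ρ ^ 2) ^ 3) (bubbleWeight ρ) ρ := by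
  have hne : (1 + ρ ^ 2 : ℝ) ≠ 0 := by positivity
  refine (((hasDerivAt_pow 6 ρ).const_mul 4).div
    (((hasDerivAt_pow 2 ρ).const_add 1).fun_pow 3) (pow_ne_zero 3 hne)).congr_deriv ?_
  unfold bubbleWeight
  field_simp
  ring

lemma integral_bubbleWeight (X : ℝ) :
    ∫ ρ in (0:ℝ)..X, bubbleWeight ρ = 4 * X ^ 6 / (1 + X ^ 2) ^ 3 := by
  rw [integral_eq_sub_of_hasDerivAt (fun ρ _ => hasDerivAt_primitive_bubbleWeight ρ)
    (continuous_bubbleWeight.intervalIntegrable 0 X)]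
  simp

lemma abs_integral_bubbleWeight_sub_four_le (X : ℝ) :
    |(∫ ρ in (0:ℝ)..X, bubbleWeight ρ) - 4| ≤ 12 / (1 + X ^ 2) := by
  have hu : (0 : ℝ) < 1 + X ^ 2 := by positivity
  have hdefect : 4 - 4 * X ^ 6 / (1 + X ^ 2) ^ 3
      = 4 * (1 + 3 * X ^ 2 + 3 * X ^ 4) / (1 + X ^ 2) ^ 3 := by
    field_simp
    ring
  rw [integral_bubbleWeight, abs_sub_comm, hdefect, abs_of_nonneg (by positivity),
    div_le_div_iff₀ (by positivity) hu]
  nlinarith [pow_pos hu 2, sq_nonneg X]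

lemma abs_pow_seven_le_one_add_sq_pow_four (ρ : ℝ) : |ρ| ^ 7 ≤ (1 + ρ ^ 2) ^ 4 := by
  have h1 : |ρ| ≤ 1 + ρ ^ 2 := by nlinarith [sq_abs ρ, sq_nonneg (|ρ| - 1)]
  have h2 : |ρ| ^ 2 ≤ 1 + ρ ^ 2 := by rw [sq_abs]; linarith
  calc |ρ| ^ 7 = |ρ| * (|ρ| ^ 2) ^ 3 := by ring
    _ ≤ (1 + ρ ^ 2) * (1 + ρ ^ 2) ^ 3 := by gcongr
    _ = (1 + ρ ^ 2) ^ 4 := by ring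

lemma abs_bubbleWeight_mul_sq_le (ρ : ℝ) : |bubbleWeight ρ| * ρ ^ 2 ≤ 24 := by
  have hu : (0 : ℝ) < (1 + ρ ^ 2) ^ 4 := by positivity
  rw [bubbleWeight, abs_div, abs_of_pos hu, div_mul_eq_mul_div, div_le_iff₀ hu, abs_mul,
    abs_pow]
  calc |24| * |ρ| ^ 5 * ρ ^ 2 = 24 * |ρ| ^ 7 := by
        rw [← sq_abs ρ, abs_of_pos (by norm_num : (0:ℝ) < 24)]
        ring
    _ ≤ 24 * (1 + ρ ^ 2) ^ 4 := by gcongr; exact abs_pow_seven_le_one_add_sq_pow_four ρ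

/-- There exists `C > 0` such that for every `R ≥ 2` and `μ ∈ (0,1]`,
`|∫₀^{4R} 24 ρ⁵/(1+ρ²)⁴ e^{−μρ²} dρ − 4| ≤ C (R⁻² + μ R²)`. -/
theorem truncated_gaussian_integral_estimate :
    ∃ C : ℝ, 0 < C ∧ ∀ R : ℝ, 2 ≤ R → ∀ μ : ℝ, μ ∈ Set.Ioc (0:ℝ) 1 →
      |(∫ ρ in (0:ℝ)..(4 * R), 24 * ρ ^ 5 / (1 + ρ ^ 2) ^ 4 * Real.exp (-μ * ρ ^ 2)) - 4|
        ≤ C * ((R ^ 2)⁻¹ + μ * R ^ 2) := by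
  refine ⟨48, by norm_num, fun R hR μ ⟨hμ, _⟩ => ?_⟩
  have hgauss := abs_integral_mul_exp_neg_mul_sq_sub_integral_le continuous_bubbleWeight
    abs_bubbleWeight_mul_sq_le hμ.le 0 (4 * R)
  rw [sub_zero, abs_of_nonneg (a := 4 * R) (by linarith)] at hgauss
  have hgauss_le : μ * 24 * (4 * R) ≤ 48 * (μ * R ^ 2) := by
    nlinarith [mul_nonneg hμ.le (by nlinarith : (0:ℝ) ≤ R ^ 2 - 2 * R)]
  have htail_le : 12 / (1 + (4 * R) ^ 2) ≤ 48 * (R ^ 2)⁻¹ := by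
    rw [← div_eq_mul_inv, div_le_div_iff₀ (by positivity) (by positivity)]
    nlinarith
  calc _ ≤ _ := abs_sub_le _ (∫ ρ in (0:ℝ)..(4 * R), bubbleWeight ρ) _
    _ ≤ 48 * (μ * R ^ 2) + 48 * (R ^ 2)⁻¹ :=
        add_le_add (hgauss.trans hgauss_le)
          ((abs_integral_bubbleWeight_sub_four_le (4 * R)).trans htail_le)
    _ = 48 * ((R ^ 2)⁻¹ + μ * R ^ 2) := by ring
end

section
/- Let n ≥ 1 be an integer, a ∈ [0,1) and 0 ≤ b < n. There is a constant C = C(n,a,b) such that for all t > 0 and all x ∈ ℝⁿ with |x| ≥ 1: ∫_{|y| ≤ |x|/2} e^{−|x−y|²/(4t)} ⟨y⟩^{−b} (log(2+|y|))^{−a} dy ≤ C e^{−|x|²/(16t)} |x|^{n−b} (log(2+|x|))^{−a}. -/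
/-!
On `‖y‖ ≤ ‖x‖ / 2` we have `‖x - y‖ ≥ ‖x‖ / 2`, so the Gaussian factor is at most
`exp (-‖x‖² / (16 t))`. For the weight, fix `ε = (n - b) / 2`. The logarithm varies slowly:
`log v ≤ (1 + 1 / (ε log 2)) (v / u)^ε log u` for `2 ≤ u ≤ v`, so with `u = 2 + ‖y‖` and
`v = 2 + ‖x‖` the factor `log (2 + ‖y‖)^(-a)` costs only `((2 + ‖x‖) / (2 + ‖y‖))^ε` when
replaced by `log (2 + ‖x‖)^(-a)`. Together with `⟨y⟩^(-b) (2 + ‖y‖)^(-ε) ≤ ‖y‖^(-(b + ε))` the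
integrand is dominated by a multiple of `‖y‖^(-(b + ε))`; as `b + ε < n`, this integrates in polar
coordinates to a multiple of `(‖x‖ / 2)^(n - b - ε)`, and `(2 + ‖x‖)^ε ≤ 3^ε ‖x‖^ε`.
-/

open MeasureTheory Metric Set Real Module

section HaarBall

variable {E : Type*} [NormedAddCommGroup E] [NormedSpace ℝ E] [FiniteDimensional ℝ E]
  [MeasurableSpace E] [BorelSpace E] [Nontrivial E] (μ : Measure E) [μ.IsAddHaarMeasure]

theorem integrableOn_closedBall_norm_rpow_neg {c : ℝ} (hc : c < finrank ℝ E) (R : ℝ) :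
    IntegrableOn (fun x : E ↦ ‖x‖ ^ (-c)) (closedBall 0 R) μ :=
  (integrableOn_ball_of_norm_le_rpow (r := R + 1) finrank_pos hc
    (.of_forall fun x ↦ by rw [one_mul, norm_of_nonneg (rpow_nonneg (norm_nonneg x) _)])
    (measurable_norm.pow_const _).aestronglyMeasurable).mono_set
    (closedBall_subset_ball (lt_add_one R))

theorem setIntegral_closedBall_norm_rpow_neg {c R : ℝ} (hc : c < finrank ℝ E) (hR : 0 ≤ R) :
    ∫ x in closedBall (0 : E) R, ‖x‖ ^ (-c) ∂μ =
      finrank ℝ E * μ.real (ball 0 1) * R ^ (finrank ℝ E - c) / (finrank ℝ E - c) := by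
  have hp : -1 < (finrank ℝ E : ℝ) - 1 - c := by linarith
  calc ∫ x in closedBall (0 : E) R, ‖x‖ ^ (-c) ∂μ
      = ∫ x, (Iic R).indicator (· ^ (-c)) ‖x‖ ∂μ := by
        rw [← integral_indicator measurableSet_closedBall]
        congr with x
        by_cases hx : ‖x‖ ≤ R <;> simp [hx]
    _ = finrank ℝ E * μ.real (ball 0 1) * ∫ y in Ioc 0 R, y ^ ((finrank ℝ E : ℝ) - 1 - c) := by
        rw [integral_fun_norm_addHaar, nsmul_eq_mul, smul_eq_mul, mul_assoc]
        congr 2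
        simp only [smul_eq_mul, ← indicator_mul_right (Iic R) (fun y : ℝ ↦ y ^ (finrank ℝ E - 1))]
        rw [integral_indicator measurableSet_Iic, Measure.restrict_restrict measurableSet_Iic,
          Iic_inter_Ioi]
        refine setIntegral_congr_fun measurableSet_Ioc fun y hy ↦ ?_
        rw [← rpow_natCast, ← rpow_add hy.1, Nat.cast_sub finrank_pos]
        ring_nf
    _ = _ := by
        rw [← intervalIntegral.integral_of_le hR, integral_rpow (Or.inl hp),
          zero_rpow (by linarith)]
        ring_nf

theorem setIntegral_closedBall_le_of_le_mul_norm_rpow_neg {f : E → ℝ} {c M R : ℝ}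
    (hc : c < finrank ℝ E) (hR : 0 ≤ R)
    (hf : ∀ x ∈ closedBall (0 : E) R, x ≠ 0 → f x ≤ M * ‖x‖ ^ (-c)) (hf₀ : ∀ x, 0 ≤ f x) :
    ∫ x in closedBall (0 : E) R, f x ∂μ ≤
      M * (finrank ℝ E * μ.real (ball 0 1) * R ^ (finrank ℝ E - c) / (finrank ℝ E - c)) := by
  rw [← setIntegral_closedBall_norm_rpow_neg μ hc hR, ← integral_const_mul]
  have hne : ∀ᵐ x ∂μ, x ≠ 0 := by simp [ae_iff, measure_singleton]
  refine integral_mono_of_nonneg (.of_forall hf₀)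
    ((integrableOn_closedBall_norm_rpow_neg μ hc R).const_mul M) ?_
  filter_upwards [ae_restrict_of_ae hne, ae_restrict_mem measurableSet_closedBall] with x hx₀ hx
  exact hf x hx hx₀

end HaarBall

theorem exp_neg_norm_sub_sq_le_of_norm_le_half {E : Type*} [SeminormedAddCommGroup E]
    {x y : E} {t : ℝ} (ht : 0 < t) (hy : ‖y‖ ≤ ‖x‖ / 2) :
    exp (-‖x - y‖ ^ 2 / (4 * t)) ≤ exp (-‖x‖ ^ 2 / (16 * t)) := by
  have hxy : ‖x‖ / 2 ≤ ‖x - y‖ := by linarith [norm_sub_norm_le x y]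
  have hsq : (‖x‖ / 2) ^ 2 ≤ ‖x - y‖ ^ 2 := by gcongr
  rw [exp_le_exp, neg_div, neg_div, neg_le_neg_iff]
  calc ‖x‖ ^ 2 / (16 * t) = (‖x‖ / 2) ^ 2 / (4 * t) := by field_simp; ring
    _ ≤ ‖x - y‖ ^ 2 / (4 * t) := by gcongr

theorem log_le_mul_rpow_div_mul_log {u v ε : ℝ} (hε : 0 < ε) (hu : 2 ≤ u) (huv : u ≤ v) :
    log v ≤ (1 + (ε * log 2)⁻¹) * (v / u) ^ ε * log u := by
  have hlog2 : 0 < log 2 := log_pos one_lt_two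
  have hlogu : log 2 ≤ log u := log_le_log two_pos hu
  have hu₀ : 0 < u := by linarith
  have hvu : 0 < v / u := div_pos (by linarith) hu₀
  have hQ : 1 ≤ (v / u) ^ ε := one_le_rpow ((one_le_div hu₀).2 huv) hε.le
  have hlogQ : log (v / u) ≤ (v / u) ^ ε / ε := log_le_rpow_div hvu.le hε
  calc log v = log u + log (v / u) := by
        rw [log_div (by linarith) (by linarith)]; ring
    _ ≤ (v / u) ^ ε * log u + (v / u) ^ ε / ε * (log u / log 2) := by
        gcongr
        · exact le_mul_of_one_le_left (by linarith) hQ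
        · exact hlogQ.trans (le_mul_of_one_le_right (by positivity) ((one_le_div hlog2).2 hlogu))
    _ = (1 + (ε * log 2)⁻¹) * (v / u) ^ ε * log u := by field_simp

theorem log_rpow_neg_le_of_le {a u v ε : ℝ} (ha : a ≤ 1) (hε : 0 < ε) (hu : 2 ≤ u) (huv : u ≤ v) :
    log u ^ (-a) ≤ (1 + (ε * log 2)⁻¹) * (v / u) ^ ε * log v ^ (-a) := by
  have hlogu : 0 < log u := log_pos (by linarith)
  have hlogv : 0 < log v := log_pos (by linarith)
  have hρ : 1 ≤ log v / log u := (one_le_div hlogu).2 (log_le_log (by linarith) huv)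
  calc log u ^ (-a) = (log v / log u) ^ a * log v ^ (-a) := by
        rw [div_rpow hlogv.le hlogu.le, rpow_neg hlogu.le, rpow_neg hlogv.le]
        field_simp
    _ ≤ (log v / log u) * log v ^ (-a) := by
        gcongr
        simpa using rpow_le_rpow_of_exponent_le hρ ha
    _ ≤ (1 + (ε * log 2)⁻¹) * (v / u) ^ ε * log v ^ (-a) := by
        gcongr
        rw [div_le_iff₀ hlogu]
        exact log_le_mul_rpow_div_mul_log hε hu huv

theorem exp_mul_weight_le_of_norm_le_half {E : Type*} [SeminormedAddCommGroup E] {x y : E}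
    {a b t ε : ℝ} (ha : a ≤ 1) (hb : 0 ≤ b) (ht : 0 < t) (hε : 0 < ε) (hy₀ : 0 < ‖y‖)
    (hy : ‖y‖ ≤ ‖x‖ / 2) :
    exp (-‖x - y‖ ^ 2 / (4 * t)) * sqrt (1 + ‖y‖ ^ 2) ^ (-b) * log (2 + ‖y‖) ^ (-a) ≤
      (1 + (ε * log 2)⁻¹) * exp (-‖x‖ ^ 2 / (16 * t)) * (2 + ‖x‖) ^ ε * log (2 + ‖x‖) ^ (-a)
        * ‖y‖ ^ (-(b + ε)) := by
  have hlogx : 0 ≤ log (2 + ‖x‖) ^ (-a) := rpow_nonneg (log_nonneg (by linarith)) _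
  have hweight : sqrt (1 + ‖y‖ ^ 2) ^ (-b) * ((2 + ‖x‖) / (2 + ‖y‖)) ^ ε
      ≤ (2 + ‖x‖) ^ ε * ‖y‖ ^ (-(b + ε)) := by
    have hsqrt : ‖y‖ ≤ sqrt (1 + ‖y‖ ^ 2) := le_sqrt_of_sq_le (by linarith)
    rw [div_rpow (by linarith) (by linarith), neg_add, rpow_add hy₀, rpow_neg hy₀.le ε]
    calc sqrt (1 + ‖y‖ ^ 2) ^ (-b) * ((2 + ‖x‖) ^ ε / (2 + ‖y‖) ^ ε)
        ≤ ‖y‖ ^ (-b) * ((2 + ‖x‖) ^ ε / ‖y‖ ^ ε) := by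
          refine mul_le_mul (rpow_le_rpow_of_nonpos hy₀ hsqrt (neg_nonpos.2 hb)) ?_
            (by positivity) (by positivity)
          exact div_le_div_of_nonneg_left (by positivity) (by positivity)
            (rpow_le_rpow hy₀.le (by linarith) hε.le)
      _ = (2 + ‖x‖) ^ ε * (‖y‖ ^ (-b) * (‖y‖ ^ ε)⁻¹) := by ring
  calc exp (-‖x - y‖ ^ 2 / (4 * t)) * sqrt (1 + ‖y‖ ^ 2) ^ (-b) * log (2 + ‖y‖) ^ (-a)
      ≤ exp (-‖x‖ ^ 2 / (16 * t)) * sqrt (1 + ‖y‖ ^ 2) ^ (-b)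
          * ((1 + (ε * log 2)⁻¹) * ((2 + ‖x‖) / (2 + ‖y‖)) ^ ε * log (2 + ‖x‖) ^ (-a)) := by
        have hexp := exp_neg_norm_sub_sq_le_of_norm_le_half ht hy
        have hlog : log (2 + ‖y‖) ^ (-a)
            ≤ (1 + (ε * log 2)⁻¹) * ((2 + ‖x‖) / (2 + ‖y‖)) ^ ε * log (2 + ‖x‖) ^ (-a) :=
          log_rpow_neg_le_of_le ha hε (by linarith) (by linarith)
        have hlogy : 0 ≤ log (2 + ‖y‖) ^ (-a) := rpow_nonneg (log_nonneg (by linarith)) _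
        gcongr
    _ = (1 + (ε * log 2)⁻¹) * exp (-‖x‖ ^ 2 / (16 * t)) * log (2 + ‖x‖) ^ (-a)
          * (sqrt (1 + ‖y‖ ^ 2) ^ (-b) * ((2 + ‖x‖) / (2 + ‖y‖)) ^ ε) := by ring
    _ ≤ (1 + (ε * log 2)⁻¹) * exp (-‖x‖ ^ 2 / (16 * t)) * log (2 + ‖x‖) ^ (-a)
          * ((2 + ‖x‖) ^ ε * ‖y‖ ^ (-(b + ε))) := by gcongr
    _ = _ := by ring

theorem two_add_rpow_mul_half_rpow_le {X ε p : ℝ} (hX : 1 ≤ X) (hε : 0 ≤ ε) (hp : 0 ≤ p) :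
    (2 + X) ^ ε * (X / 2) ^ p ≤ 3 ^ ε * X ^ (ε + p) := by
  have hX₀ : 0 < X := by linarith
  calc (2 + X) ^ ε * (X / 2) ^ p ≤ (3 * X) ^ ε * X ^ p := by gcongr <;> linarith
    _ = 3 ^ ε * X ^ (ε + p) := by rw [mul_rpow (by norm_num) hX₀.le, rpow_add hX₀]; ring

/-- Near-origin region estimate in the proof of Lemma 2.3: for `|x| ≥ 1`,
`∫_{|y| ≤ |x|/2} e^{−|x−y|²/(4t)} ⟨y⟩^{−b}(log(2+|y|))^{−a} dy
  ≤ C e^{−|x|²/(16t)} |x|^{n−b} (log(2+|x|))^{−a}`. -/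
theorem near_origin_region_estimate (n : ℕ) (hn : 1 ≤ n) (a b : ℝ)
    (ha : a ∈ Set.Ico (0:ℝ) 1) (hb0 : 0 ≤ b) (hbn : b < n) :
    ∃ C : ℝ, 0 < C ∧ ∀ t : ℝ, 0 < t → ∀ x : EuclideanSpace ℝ (Fin n), 1 ≤ ‖x‖ →
      (∫ y in {y : EuclideanSpace ℝ (Fin n) | ‖y‖ ≤ ‖x‖ / 2},
          Real.exp (-‖x - y‖ ^ 2 / (4 * t))
            * Real.sqrt (1 + ‖y‖ ^ 2) ^ (-b) * Real.log (2 + ‖y‖) ^ (-a))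
        ≤ C * Real.exp (-‖x‖ ^ 2 / (16 * t)) * ‖x‖ ^ ((n : ℝ) - b)
          * Real.log (2 + ‖x‖) ^ (-a) := by
  have : Nontrivial (EuclideanSpace ℝ (Fin n)) :=
    Module.nontrivial_of_finrank_pos (R := ℝ) (by rwa [finrank_euclideanSpace_fin])
  set ε : ℝ := (n - b) / 2
  have hε : 0 < ε := by simp only [ε]; linarith
  have hnc : 0 < (n : ℝ) - (b + ε) := by simp only [ε]; linarith
  set K : ℝ := 1 + (ε * log 2)⁻¹
  set A : ℝ := n * volume.real (ball (0 : EuclideanSpace ℝ (Fin n)) 1) / (n - (b + ε))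
  have hA : 0 < A := div_pos (mul_pos (Nat.cast_pos.2 hn)
    (ENNReal.toReal_pos (measure_ball_pos _ _ one_pos).ne' measure_ball_lt_top.ne)) hnc
  refine ⟨K * 3 ^ ε * A, by positivity, fun t ht x hx ↦ ?_⟩
  have hL : 0 ≤ log (2 + ‖x‖) ^ (-a) := rpow_nonneg (log_nonneg (by linarith)) _
  have hS : {y : EuclideanSpace ℝ (Fin n) | ‖y‖ ≤ ‖x‖ / 2} = closedBall 0 (‖x‖ / 2) := by
    ext; simp
  have hint := setIntegral_closedBall_le_of_le_mul_norm_rpow_neg volume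
    (f := fun y ↦ exp (-‖x - y‖ ^ 2 / (4 * t)) * sqrt (1 + ‖y‖ ^ 2) ^ (-b) * log (2 + ‖y‖) ^ (-a))
    (by rwa [finrank_euclideanSpace_fin, ← sub_pos]) (by positivity)
    (fun y hy hy₀ ↦ exp_mul_weight_le_of_norm_le_half ha.2.le hb0 ht hε (norm_pos_iff.2 hy₀)
      (mem_closedBall_zero_iff.1 hy))
    fun y ↦ by have := log_nonneg (by linarith [norm_nonneg y] : (1 : ℝ) ≤ 2 + ‖y‖); positivity
  rw [finrank_euclideanSpace_fin, ← hS] at hint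
  calc _ ≤ _ := hint
    _ = (K * A * exp (-‖x‖ ^ 2 / (16 * t)) * log (2 + ‖x‖) ^ (-a))
          * ((2 + ‖x‖) ^ ε * (‖x‖ / 2) ^ (n - (b + ε))) := by ring
    _ ≤ (K * A * exp (-‖x‖ ^ 2 / (16 * t)) * log (2 + ‖x‖) ^ (-a))
          * (3 ^ ε * ‖x‖ ^ (ε + (n - (b + ε)))) :=
        mul_le_mul_of_nonneg_left (two_add_rpow_mul_half_rpow_le hx hε.le hnc.le) (by positivity)
    _ = _ := by rw [show ε + (n - (b + ε)) = n - b by ring]; ring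
end

section
/- Let n ≥ 1 be an integer, a ∈ [0,1) and 0 ≤ b < n. There is a constant C = C(n,a,b) such that for all t > 0 and all x ∈ ℝⁿ with |x| ≥ √t: ∫_{|y| ≥ 2|x|} e^{−|y|²/(16t)} ⟨y⟩^{−b} (log(2+|y|))^{−a} dy ≤ C t^{(n−b)/2} (log(2+|x|))^{−a} e^{−|x|²/(8t)}. -/
/-!
On `|y| ≥ 2|x| ≥ 2√t` the integrand is dominated by a constant times a Gaussian:
`e^{-|y|²/(16t)} ≤ e^{-|x|²/(8t)} e^{-|y|²/(32t)}` because `|y|² ≥ 4|x|²`,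
`⟨y⟩^{-b} ≤ t^{-b/2}` because `⟨y⟩ ≥ |y| ≥ √t`,
and `log(2+|y|)^{-a} ≤ log(2+|x|)^{-a}`.
Integrating the remaining Gaussian over all of `ℝⁿ` gives `(32πt)^{n/2}`, so one may take
`C = (32π)^{n/2}`.
-/

open MeasureTheory Real

lemma exp_neg_sq_div_le_mul_exp {t r ρ : ℝ} (ht : 0 < t) (hr : 0 ≤ r) (h : 2 * r ≤ ρ) :
    exp (-ρ ^ 2 / (16 * t)) ≤ exp (-r ^ 2 / (8 * t)) * exp (-(32 * t)⁻¹ * ρ ^ 2) := by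
  rw [← exp_add, exp_le_exp]
  have : 4 * r ^ 2 ≤ ρ ^ 2 := by nlinarith
  field_simp
  nlinarith

lemma sqrt_one_add_sq_rpow_neg_le {t ρ b : ℝ} (hb : 0 ≤ b) (ht : 0 < t)
    (h : t ≤ 1 + ρ ^ 2) :
    √(1 + ρ ^ 2) ^ (-b) ≤ t ^ (-b / 2) := by
  rw [sqrt_eq_rpow, ← rpow_mul (by positivity)]
  convert rpow_le_rpow_of_nonpos ht h (by linarith : -b / 2 ≤ 0) using 2
  ring

lemma log_two_add_rpow_pos {r : ℝ} (hr : 0 ≤ r) (s : ℝ) : 0 < log (2 + r) ^ s :=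
  rpow_pos_of_pos (log_pos (by linarith)) s

lemma log_two_add_rpow_neg_le {a r ρ : ℝ} (ha : 0 ≤ a) (hr : 0 ≤ r) (h : r ≤ ρ) :
    log (2 + ρ) ^ (-a) ≤ log (2 + r) ^ (-a) :=
  rpow_le_rpow_of_nonpos (log_pos (by linarith)) (log_le_log (by linarith) (by linarith))
    (by linarith)

lemma far_field_integrand_le {a b t r ρ : ℝ} (ha : 0 ≤ a) (hb : 0 ≤ b) (ht : 0 < t)
    (hr : √t ≤ r) (h : 2 * r ≤ ρ) :
    exp (-ρ ^ 2 / (16 * t)) * √(1 + ρ ^ 2) ^ (-b) * log (2 + ρ) ^ (-a)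
      ≤ log (2 + r) ^ (-a) * exp (-r ^ 2 / (8 * t)) * t ^ (-b / 2)
        * exp (-(32 * t)⁻¹ * ρ ^ 2) := by
  have hr0 : 0 ≤ r := (sqrt_nonneg t).trans hr
  have hrρ : r ≤ ρ := by linarith
  have htρ : t ≤ 1 + ρ ^ 2 := by
    have : t ≤ r ^ 2 := by rw [← sq_sqrt ht.le]; gcongr
    nlinarith
  have hexp := exp_neg_sq_div_le_mul_exp ht hr0 h
  have hbracket := sqrt_one_add_sq_rpow_neg_le hb ht htρ
  have hlog := log_two_add_rpow_neg_le ha hr0 hrρ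
  have := log_two_add_rpow_pos (hr0.trans hrρ) (-a)
  calc exp (-ρ ^ 2 / (16 * t)) * √(1 + ρ ^ 2) ^ (-b) * log (2 + ρ) ^ (-a)
      ≤ (exp (-r ^ 2 / (8 * t)) * exp (-(32 * t)⁻¹ * ρ ^ 2)) * t ^ (-b / 2)
          * log (2 + r) ^ (-a) := by gcongr
    _ = _ := by ring

theorem setIntegral_far_field_le {E : Type*} [NormedAddCommGroup E] [InnerProductSpace ℝ E]
    [FiniteDimensional ℝ E] [MeasurableSpace E] [BorelSpace E]
    {a b t : ℝ} (ha : 0 ≤ a) (hb : 0 ≤ b) (ht : 0 < t) {x : E} (hx : √t ≤ ‖x‖) :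
    ∫ y in {y : E | 2 * ‖x‖ ≤ ‖y‖},
        exp (-‖y‖ ^ 2 / (16 * t)) * √(1 + ‖y‖ ^ 2) ^ (-b) * log (2 + ‖y‖) ^ (-a)
      ≤ (32 * π) ^ (Module.finrank ℝ E / 2 : ℝ) * t ^ ((Module.finrank ℝ E - b) / 2)
        * log (2 + ‖x‖) ^ (-a) * exp (-‖x‖ ^ 2 / (8 * t)) := by
  set c := log (2 + ‖x‖) ^ (-a) * exp (-‖x‖ ^ 2 / (8 * t)) * t ^ (-b / 2)
  have hc : 0 < c := by
    have := log_two_add_rpow_pos (norm_nonneg x) (-a)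
    positivity
  have hgauss : ∫ y : E, c * exp (-(32 * t)⁻¹ * ‖y‖ ^ 2)
      = c * (π / (32 * t)⁻¹) ^ (Module.finrank ℝ E / 2 : ℝ) := by
    rw [integral_const_mul, GaussianFourier.integral_rexp_neg_mul_sq_norm (by positivity)]
  have hint : Integrable fun y : E ↦ c * exp (-(32 * t)⁻¹ * ‖y‖ ^ 2) :=
    .of_integral_ne_zero (by rw [hgauss]; positivity)
  have hS : MeasurableSet {y : E | 2 * ‖x‖ ≤ ‖y‖} :=
    measurableSet_le measurable_const measurable_norm
  calc _ ≤ ∫ y in {y : E | 2 * ‖x‖ ≤ ‖y‖}, c * exp (-(32 * t)⁻¹ * ‖y‖ ^ 2) :=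
        integral_mono_of_nonneg
          (.of_forall fun y ↦
            mul_nonneg (by positivity) (log_two_add_rpow_pos (norm_nonneg y) _).le)
          hint.integrableOn
          ((ae_restrict_iff' hS).2 (.of_forall fun y hy ↦ far_field_integrand_le ha hb ht hx hy))
    _ ≤ ∫ y : E, c * exp (-(32 * t)⁻¹ * ‖y‖ ^ 2) :=
        setIntegral_le_integral hint (.of_forall fun y ↦ by positivity)
    _ = _ := by
        rw [hgauss, div_inv_eq_mul, show π * (32 * t) = 32 * π * t by ring,
          mul_rpow (by positivity) ht.le, sub_div, sub_eq_neg_add, ← neg_div, rpow_add ht]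
        ring

theorem far_field_region_estimate_general (n : ℕ) (a b : ℝ)
    (ha : a ∈ Set.Ico (0:ℝ) 1) (hb0 : 0 ≤ b) :
    ∃ C : ℝ, 0 < C ∧ ∀ t : ℝ, 0 < t → ∀ x : EuclideanSpace ℝ (Fin n),
      Real.sqrt t ≤ ‖x‖ →
      (∫ y in {y : EuclideanSpace ℝ (Fin n) | 2 * ‖x‖ ≤ ‖y‖},
          Real.exp (-‖y‖ ^ 2 / (16 * t))
            * Real.sqrt (1 + ‖y‖ ^ 2) ^ (-b) * Real.log (2 + ‖y‖) ^ (-a))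
        ≤ C * t ^ (((n : ℝ) - b) / 2) * Real.log (2 + ‖x‖) ^ (-a)
          * Real.exp (-‖x‖ ^ 2 / (8 * t)) := by
  refine ⟨(32 * π) ^ ((n : ℝ) / 2), by positivity, fun t ht x hx ↦ ?_⟩
  simpa only [finrank_euclideanSpace_fin] using setIntegral_far_field_le ha.1 hb0 ht hx

/-- Far-field region estimate in the proof of Lemma 2.3: for `|x| ≥ √t`,
`∫_{|y| ≥ 2|x|} e^{−|y|²/(16t)} ⟨y⟩^{−b}(log(2+|y|))^{−a} dy
  ≤ C t^{(n−b)/2} (log(2+|x|))^{−a} e^{−|x|²/(8t)}`. -/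
theorem far_field_region_estimate (n : ℕ) (hn : 1 ≤ n) (a b : ℝ)
    (ha : a ∈ Set.Ico (0:ℝ) 1) (hb0 : 0 ≤ b) (hbn : b < n) :
    ∃ C : ℝ, 0 < C ∧ ∀ t : ℝ, 0 < t → ∀ x : EuclideanSpace ℝ (Fin n),
      Real.sqrt t ≤ ‖x‖ →
      (∫ y in {y : EuclideanSpace ℝ (Fin n) | 2 * ‖x‖ ≤ ‖y‖},
          Real.exp (-‖y‖ ^ 2 / (16 * t))
            * Real.sqrt (1 + ‖y‖ ^ 2) ^ (-b) * Real.log (2 + ‖y‖) ^ (-a))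
        ≤ C * t ^ (((n : ℝ) - b) / 2) * Real.log (2 + ‖x‖) ^ (-a)
          * Real.exp (-‖x‖ ^ 2 / (8 * t)) :=
  far_field_region_estimate_general n a b ha hb0
end
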